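/- Let K_1, …, K_r ⊆ ℝⁿ be closed convex sets, x̄ ∈ K := ∩_l K_l, and δ > 0 such that for every x ∈ K ∩ B(x̄,δ): if v_l ∈ N_{K_l}(x) and Σ_l v_l = 0 then all v_l = 0. Then there exists a constant M' > 0 such that whenever x ∈ K ∩ B(x̄,δ), v_l ∈ N_{K_l}(x), and v = Σ_{l=1}^r v_l, one has max_l ‖v_l‖ ≤ M'‖v‖. -/

import Mathlib

/-!
The set of pairs `(x, v)` with `x` in the compact set `K ∩ B(x̄, δ)`, `v` a tuple of normal
vectors at `x` and `‖v‖ = 1` is compact, since the graph of a normal cone is closed. The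
constraint qualification says that `‖∑ l, v l‖` does not vanish on it, so it has a positive
minimum `m`; as normal cones are cones, scaling gives `‖v‖ ≤ m⁻¹ ‖∑ l, v l‖` for all tuples.
-/

open RealInnerProductSpace

/-- The normal cone of a convex set `C` at `x`. -/
def normalCone {n : ℕ} (C : Set (EuclideanSpace ℝ (Fin n))) (x : EuclideanSpace ℝ (Fin n)) :
    Set (EuclideanSpace ℝ (Fin n)) :=
  {v | ∀ y ∈ C, ⟪v, y - x⟫ ≤ 0}

theorem exists_norm_le_mul_norm_of_isClosed_graph_cone {X F G : Type*} [TopologicalSpace X]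
    [NormedAddCommGroup F] [NormedSpace ℝ F] [ProperSpace F] [NormedAddCommGroup G]
    [NormedSpace ℝ G] {A : Set X} (hA : IsCompact A) {N : X → Set F}
    (hN : IsClosed {p : X × F | p.2 ∈ N p.1})
    (hcone : ∀ x, ∀ v ∈ N x, ∀ c : ℝ, 0 < c → c • v ∈ N x)
    {f : F → G} (hf : Continuous f) (hf_smul : ∀ (c : ℝ) v, f (c • v) = c • f v)
    (hkernel : ∀ x ∈ A, ∀ v ∈ N x, f v = 0 → v = 0) :
    ∃ M > (0 : ℝ), ∀ x ∈ A, ∀ v ∈ N x, ‖v‖ ≤ M * ‖f v‖ := by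
  set T := {p : X × F | p.2 ∈ N p.1} ∩ A ×ˢ Metric.sphere 0 1
  have hT : IsCompact T := (hA.prod (isCompact_sphere 0 1)).inter_left hN
  have hpos : ∀ p ∈ T, 0 < ‖f p.2‖ := by
    rintro ⟨x, v⟩ ⟨hv, hx, hv1⟩
    refine norm_pos_iff.mpr fun hfv => ?_
    simp [hkernel x hx v hv hfv] at hv1
  obtain ⟨m, hm, hmT⟩ := hT.exists_forall_le' (by fun_prop) hpos
  refine ⟨m⁻¹, inv_pos.mpr hm, fun x hx v hv => ?_⟩
  rcases eq_or_ne v 0 with rfl | hv0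
  · simpa using mul_nonneg (inv_nonneg.mpr hm.le) (norm_nonneg (f 0))
  have hv' : 0 < ‖v‖ := norm_pos_iff.mpr hv0
  have hunit : (x, ‖v‖⁻¹ • v) ∈ T :=
    ⟨hcone x v hv _ (inv_pos.mpr hv'), hx, by simp [norm_smul, hv'.ne']⟩
  have hm_le : m ≤ ‖v‖⁻¹ * ‖f v‖ := by
    simpa [hf_smul, norm_smul, hv'.le] using hmT _ hunit
  rw [le_inv_mul_iff₀ hv'] at hm_le
  rw [inv_mul_eq_div, le_div_iff₀ hm]
  linarith

section normalCone

variable {n : ℕ}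

lemma smul_mem_normalCone {C : Set (EuclideanSpace ℝ (Fin n))} {x v : EuclideanSpace ℝ (Fin n)}
    (hv : v ∈ normalCone C x) {c : ℝ} (hc : 0 ≤ c) : c • v ∈ normalCone C x := fun y hy => by
  rw [real_inner_smul_left]
  exact mul_nonpos_of_nonneg_of_nonpos hc (hv y hy)

lemma isClosed_setOf_mem_normalCone (C : Set (EuclideanSpace ℝ (Fin n))) :
    IsClosed {p : EuclideanSpace ℝ (Fin n) × EuclideanSpace ℝ (Fin n) |
      p.2 ∈ normalCone C p.1} := by
  have h : {p : EuclideanSpace ℝ (Fin n) × EuclideanSpace ℝ (Fin n) | p.2 ∈ normalCone C p.1} =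
      ⋂ y ∈ C, {p | ⟪p.2, y - p.1⟫ ≤ 0} := by
    ext; simp [normalCone]
  rw [h]
  exact isClosed_biInter fun y _ => isClosed_le (by fun_prop) continuous_const

lemma isClosed_setOf_forall_mem_normalCone {ι : Type*}
    (K : ι → Set (EuclideanSpace ℝ (Fin n))) :
    IsClosed {p : EuclideanSpace ℝ (Fin n) × (ι → EuclideanSpace ℝ (Fin n)) |
      ∀ l, p.2 l ∈ normalCone (K l) p.1} := by
  have h : {p : EuclideanSpace ℝ (Fin n) × (ι → EuclideanSpace ℝ (Fin n)) |
      ∀ l, p.2 l ∈ normalCone (K l) p.1} =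
      ⋂ l, (fun p => (p.1, p.2 l)) ⁻¹' {q | q.2 ∈ normalCone (K l) q.1} := by
    ext; simp
  rw [h]
  exact isClosed_iInter fun l => (isClosed_setOf_mem_normalCone (K l)).preimage (by fun_prop)

end normalCone

theorem normal_sum_bound_general
    {n r : ℕ} (K : Fin r → Set (EuclideanSpace ℝ (Fin n)))
    (hclosed : ∀ l, IsClosed (K l))
    (xbar : EuclideanSpace ℝ (Fin n))
    (δ : ℝ)
    (hCQ : ∀ x ∈ (⋂ l, K l) ∩ Metric.closedBall xbar δ,
      ∀ v : Fin r → EuclideanSpace ℝ (Fin n),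
        (∀ l, v l ∈ normalCone (K l) x) → ∑ l, v l = 0 → ∀ l, v l = 0) :
    ∃ M' > (0:ℝ), ∀ x ∈ (⋂ l, K l) ∩ Metric.closedBall xbar δ,
      ∀ v : Fin r → EuclideanSpace ℝ (Fin n),
        (∀ l, v l ∈ normalCone (K l) x) →
          ∀ l, ‖v l‖ ≤ M' * ‖∑ l, v l‖ := by
  have hA : IsCompact ((⋂ l, K l) ∩ Metric.closedBall xbar δ) :=
    (isCompact_closedBall xbar δ).inter_left (isClosed_iInter hclosed)
  obtain ⟨M, hM, hbound⟩ := exists_norm_le_mul_norm_of_isClosed_graph_cone hA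
    (N := fun x => {v | ∀ l, v l ∈ normalCone (K l) x}) (isClosed_setOf_forall_mem_normalCone K)
    (fun _ _ hv _ hc l => smul_mem_normalCone (hv l) hc.le) (f := fun v => ∑ l, v l)
    (by fun_prop) (fun c v => by simp [Finset.smul_sum])
    (fun x hx v hv hsum => funext (hCQ x hx v (by exact hv) hsum))
  exact ⟨M, hM, fun x hx v hv l => (norm_le_pi_norm v l).trans (hbound x hx v hv)⟩

/-- Uniform bound on the summands of a sum of normal vectors, under the local
constraint qualification. -/
theorem normal_sum_bound
    {n r : ℕ} (K : Fin r → Set (EuclideanSpace ℝ (Fin n)))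
    (hclosed : ∀ l, IsClosed (K l)) (hconv : ∀ l, Convex ℝ (K l))
    (xbar : EuclideanSpace ℝ (Fin n)) (hxbar : xbar ∈ ⋂ l, K l)
    (δ : ℝ) (hδ : 0 < δ)
    (hCQ : ∀ x ∈ (⋂ l, K l) ∩ Metric.closedBall xbar δ,
      ∀ v : Fin r → EuclideanSpace ℝ (Fin n),
        (∀ l, v l ∈ normalCone (K l) x) → ∑ l, v l = 0 → ∀ l, v l = 0) :
    ∃ M' > (0:ℝ), ∀ x ∈ (⋂ l, K l) ∩ Metric.closedBall xbar δ,
      ∀ v : Fin r → EuclideanSpace ℝ (Fin n),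
        (∀ l, v l ∈ normalCone (K l) x) →
          ∀ l, ‖v l‖ ≤ M' * ‖∑ l, v l‖ :=
  normal_sum_bound_general K hclosed xbar δ hCQ
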